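/- arXiv:2007.05269 — 3 statements merged into one kernel-verified Lean document; each statement's English description precedes it below -/
import Mathlib

section
/- Monotonicity of pr: for every sequence of channel actions σ over Σ and all words x, x', if x ⊑ x' then pr[σ](x) ⊑ pr[σ](x'). -/
open List
/-- `wpow u k` is the word `u` concatenated `k` times. -/
def wpow {β : Type*} (u : List β) (k : ℕ) : List β := (List.replicate k u).flatten

/-- Auxiliary residual operation, working on reversed words. -/
def resAux {α : Type*} [DecidableEq α] : List α → List α → List α
  | xr, [] => xr
  | [], _ :: _ => []
  | a :: xr, b :: vr => if a = b then resAux xr vr else resAux (a :: xr) vr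
termination_by xr vr => vr.length

/-- The residual `x / v`: the prefix of `x` obtained by removing from `x`
its longest suffix that is a subword of `v`. -/
def res {α : Type*} [DecidableEq α] (x v : List α) : List α :=
  (resAux x.reverse v.reverse).reverse

inductive Act (α : Type*) where
  | write : List α → Act α
  | read : List α → Act α

/-- written part -/
def wri {α : Type*} : List (Act α) → List α
  | [] => []
  | Act.write w :: σ => w ++ wri σ
  | Act.read _ :: σ => wri σ

/-- read part -/
def rea {α : Type*} : List (Act α) → List α
  | [] => []
  | Act.write _ :: σ => rea σ
  | Act.read w :: σ => w ++ rea σ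

/-- `pr σ x` : minimal `σ`-predecessor of `x` (processing `σ` right-to-left). -/
def pr {α : Type*} [DecidableEq α] : List (Act α) → List α → List α
  | [], x => x
  | Act.write v :: σ, x => res (pr σ x) v
  | Act.read u :: σ, x => u ++ pr σ x

/-- lossy step for a single channel action -/
def stepAct {α : Type*} : Act α → List α → List α → Prop
  | Act.write w, x, y => y <+ x ++ w
  | Act.read w, x, y => w ++ y <+ x

/-- lossy steps along a sequence of channel actions -/
def steps {α : Type*} : List (Act α) → List α → List α → Prop
  | [], x, y => x = y
  | θ :: σ, x, y => ∃ z, stepAct θ x z ∧ steps σ z y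

/-- `w` is a fractional power of `u` -/
def FracPow {α : Type*} (u w : List α) : Prop := ∃ k : ℕ, w <+: wpow u k

/-- `x ⊖ u` : remainder of `x` after reading the leftmost embedding of `u`. -/
def ominus {α : Type*} [DecidableEq α] : List α → List α → List α
  | x, [] => x
  | [], _ :: _ => []
  | a :: x, b :: u => if a = b then ominus x u else ominus x (b :: u)

/-- `σ` is increasing -/
def Increasing {α : Type*} (σ : List (Act α)) : Prop :=
  0 < (wri σ).length ∧
    wpow (rea σ) (wri σ).length <+ wpow (wri σ) ((wri σ).length - 1)


/-!
Reading `u` prepends `u`, which preserves the subword order. Writing `v` takes the residual; on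
reversed words it is a pass over `v` that, at each letter `b`, drops the head of the current word
if that head is `b`. This single step is monotone: if the larger word starts with `b`, then after
dropping it, what remains still contains the smaller word with its own leading `b` (if any) dropped.
-/

section Residual

variable {α : Type*} [DecidableEq α]

def consumeHead (b : α) : List α → List α
  | [] => []
  | a :: xr => if a = b then xr else a :: xr

lemma consumeHead_sublist (b : α) (xr : List α) : consumeHead b xr <+ xr := by
  cases xr with
  | nil => exact .slnil
  | cons a xr => rw [consumeHead]; split <;> simp

lemma consumeHead_sublist_of_sublist_cons {b : α} {xr t : List α} (h : xr <+ b :: t) :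
    consumeHead b xr <+ t := by
  cases xr with
  | nil => exact nil_sublist t
  | cons a xr =>
    rw [consumeHead]
    split
    · subst a
      exact cons_sublist_cons.mp h
    · exact (sublist_cons_iff.mp h).resolve_right (by simp [*])

lemma consumeHead_mono (b : α) {xr xr' : List α} (h : xr <+ xr') :
    consumeHead b xr <+ consumeHead b xr' := by
  cases xr' with
  | nil => simp_all
  | cons a' t' =>
    rw [consumeHead]
    split
    · subst a'
      exact consumeHead_sublist_of_sublist_cons h
    · exact (consumeHead_sublist b xr).trans h

lemma resAux_nil_left (vr : List α) : resAux [] vr = [] := by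
  cases vr <;> simp [resAux]

lemma resAux_cons_right (xr vr : List α) (b : α) :
    resAux xr (b :: vr) = resAux (consumeHead b xr) vr := by
  cases xr with
  | nil => simp [consumeHead, resAux_nil_left]
  | cons a xr => simp only [resAux, consumeHead]; split <;> rfl

lemma resAux_mono (vr : List α) {xr xr' : List α} (h : xr <+ xr') :
    resAux xr vr <+ resAux xr' vr := by
  induction vr generalizing xr xr' with
  | nil => simpa [resAux] using h
  | cons b vr ih =>
    rw [resAux_cons_right, resAux_cons_right]
    exact ih (consumeHead_mono b h)

lemma res_mono (v : List α) {x x' : List α} (h : x <+ x') : res x v <+ res x' v :=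
  (resAux_mono v.reverse h.reverse).reverse

end Residual

/-- monotonicity of `pr`. -/
theorem pr_mono {α : Type*} [DecidableEq α]
    (σ : List (Act α)) (x x' : List α) (h : x <+ x') :
    pr σ x <+ pr σ x' := by
  induction σ with
  | nil => exact h
  | cons θ σ ih =>
    cases θ with
    | write v => exact res_mono v ih
    | read u => exact ih.append_left u
end

section
/- Let σ be a sequence of channel actions over Σ, u = rea(σ), let x be a fractional power of u, and set y = pr[σ](x). If |y| > |u|, then for every n ∈ ℕ, pr[σ](u^n·x) = u^n·y. -/
open List
/-!
Processed right to left, `σ` turns `x` into a word which is either a prefix of `rea σ`, or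
`rea σ ++ B` with `B` nonempty. In the second case every residual step stops inside the
nonempty tail, since `(A ++ B) / v = A ++ B / v` whenever `B / v ≠ ε`; so a word `w` put in
front of `x` is carried through unchanged: `pr[σ](w·x) = rea σ · w · B`. The length hypothesis
excludes the first case, and for `w = uⁿ` the claim follows as `u` commutes with `uⁿ`.
-/

section Residual
variable {α : Type*} [DecidableEq α]

lemma resAux_suffix (xr vr : List α) : resAux xr vr <:+ xr := by
  induction vr generalizing xr with
  | nil => rw [resAux]
  | cons b vr ih =>
    cases xr with
    | nil => rw [resAux]
    | cons a xr =>
      rw [resAux]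
      split
      · exact (ih xr).trans (suffix_cons _ _)
      · exact ih (a :: xr)

lemma resAux_append_of_ne_nil (xr vr w : List α) (h : resAux xr vr ≠ []) :
    resAux (xr ++ w) vr = resAux xr vr ++ w := by
  induction vr generalizing xr with
  | nil => simp only [resAux]
  | cons b vr ih =>
    cases xr with
    | nil => exact absurd (by rw [resAux]) h
    | cons a xr =>
      rw [resAux] at h ⊢
      rw [cons_append, resAux]
      split_ifs at h ⊢
      · exact ih xr h
      · exact ih (a :: xr) h

lemma resAux_append_of_eq_nil (xr vr w : List α) (h : resAux xr vr = []) :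
    resAux (xr ++ w) vr <:+ w := by
  induction vr generalizing xr with
  | nil =>
    rw [resAux] at h
    subst h
    exact resAux_suffix w []
  | cons b vr ih =>
    cases xr with
    | nil => exact resAux_suffix w (b :: vr)
    | cons a xr =>
      rw [resAux] at h
      rw [cons_append, resAux]
      split_ifs at h ⊢
      · exact ih xr h
      · exact ih (a :: xr) h

lemma res_prefix (x v : List α) : res x v <+: x := by
  simpa [res] using reverse_prefix.mpr (resAux_suffix x.reverse v.reverse)

lemma res_append_of_ne_nil (A B v : List α) (h : res B v ≠ []) :
    res (A ++ B) v = A ++ res B v := by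
  have h' : resAux B.reverse v.reverse ≠ [] := by simpa [res] using h
  rw [res, reverse_append, resAux_append_of_ne_nil _ _ _ h', reverse_append, reverse_reverse,
    res]

lemma res_append_of_eq_nil (A B v : List α) (h : res B v = []) :
    res (A ++ B) v <+: A := by
  have h' : resAux B.reverse v.reverse = [] := by simpa [res] using h
  simpa [res] using reverse_prefix.mpr (resAux_append_of_eq_nil _ _ A.reverse h')

end Residual

lemma append_wpow_comm {β : Type*} (u : List β) (n : ℕ) : u ++ wpow u n = wpow u n ++ u := by
  rw [wpow, ← flatten_cons, ← replicate_succ, replicate_succ', flatten_append, flatten_singleton]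

lemma pr_prefix_rea_or_forall_pr_append {α : Type*} [DecidableEq α] (σ : List (Act α))
    (x : List α) :
    pr σ x <+: rea σ ∨ ∃ B ≠ [], ∀ w, pr σ (w ++ x) = rea σ ++ w ++ B := by
  induction σ with
  | nil =>
    cases x with
    | nil => exact Or.inl (prefix_refl _)
    | cons a x => exact Or.inr ⟨a :: x, cons_ne_nil _ _, fun w => rfl⟩
  | cons θ σ ih =>
    rcases ih with hpre | ⟨B, hB, hpr⟩
    · cases θ with
      | read u => exact Or.inl (prefix_append_right_inj u |>.mpr hpre)
      | write v => exact Or.inl ((res_prefix _ v).trans hpre)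
    · cases θ with
      | read u => exact Or.inr ⟨B, hB, fun w => by simp [pr, rea, hpr]⟩
      | write v =>
        have hx : pr σ x = rea σ ++ B := by simpa using hpr []
        by_cases hres : res B v = []
        · exact Or.inl (by rw [pr, rea, hx]; exact res_append_of_eq_nil _ _ _ hres)
        · exact Or.inr ⟨res B v, hres, fun w => by
            rw [pr, rea, hpr, res_append_of_ne_nil _ _ _ hres]⟩

theorem pr_pump_up_general {α : Type*} [DecidableEq α]
    (σ : List (Act α)) (x : List α)
    (hy : (rea σ).length < (pr σ x).length) (n : ℕ) :
    pr σ (wpow (rea σ) n ++ x) = wpow (rea σ) n ++ pr σ x := by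
  rcases pr_prefix_rea_or_forall_pr_append σ x with hpre | ⟨B, -, hpr⟩
  · exact absurd hpre.length_le (by omega)
  · have hx : pr σ x = rea σ ++ B := by simpa using hpr []
    rw [hpr, hx, append_wpow_comm, append_assoc]

/-- if `x` is a fractional power of `u = rea(σ)`, `y = pr[σ](x)` and
`|y| > |u|`, then `pr[σ](uⁿ·x) = uⁿ·y` for every `n`. -/
theorem pr_pump_up {α : Type*} [DecidableEq α]
    (σ : List (Act α)) (x : List α) (h : FracPow (rea σ) x)
    (hy : (rea σ).length < (pr σ x).length) (n : ℕ) :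
    pr σ (wpow (rea σ) n ++ x) = wpow (rea σ) n ++ pr σ x :=
  pr_pump_up_general σ x hy n
end

section
/- Let σ be a sequence of channel actions over Σ, u = rea(σ), let x be a fractional power of u, let n ∈ ℕ, and set y = pr[σ](u^n·x). If |y| > (n+1)·|u|, then y = u^n·pr[σ](x). -/
open List
/-!
Generalise to words `(p·u)ⁿ·z` with `u = rea(σ)` and `p` arbitrary, and induct on `σ`.
A read `?w`, where `rea(θ·σ) = w·u`, prepends `w` and turns `(p·w·u)ⁿ` into
`w·(u·p·w)ⁿ = (w·u·p)ⁿ·w`: it rotates the period. A write only deletes a suffix, so if the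
result is still longer than the `n` periods, that suffix lies inside `pr[σ](z)`. The extra `|u|`
in the length bound pays for the letters prepended by the reads. Taking `p = ε` gives the theorem.
-/

theorem wpow_succ {β : Type*} (u : List β) (k : ℕ) : wpow u (k + 1) = u ++ wpow u k := by
  simp [wpow, replicate_succ]

theorem length_wpow {β : Type*} (u : List β) (k : ℕ) : (wpow u k).length = k * u.length := by
  simp [wpow, length_flatten]

theorem append_wpow_append_comm {β : Type*} (a b : List β) (n : ℕ) :
    a ++ wpow (b ++ a) n = wpow (a ++ b) n ++ a := by
  induction n with
  | zero => simp [wpow]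
  | succ n ih => simp only [wpow_succ, append_assoc, ← ih]

section Residual

variable {α : Type*} [DecidableEq α]

theorem length_resAux_le (xr vr : List α) : (resAux xr vr).length ≤ xr.length := by
  induction vr generalizing xr with
  | nil => simp [resAux]
  | cons b vr ih =>
    match xr with
    | [] => simp [resAux]
    | a :: xr =>
      rw [resAux]
      split
      · exact (ih xr).trans (Nat.le_succ _)
      · exact ih (a :: xr)

theorem resAux_append_of_length_lt (vr tr sr : List α)
    (h : sr.length < (resAux (tr ++ sr) vr).length) :
    resAux (tr ++ sr) vr = resAux tr vr ++ sr := by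
  induction vr generalizing tr with
  | nil => simp [resAux]
  | cons b vr ih =>
    match tr with
    | [] => exact absurd h (not_lt.2 (length_resAux_le sr _))
    | a :: tr =>
      simp only [cons_append, resAux] at h ⊢
      split_ifs at h ⊢
      · exact ih tr h
      · exact ih (a :: tr) h

theorem length_res_le (x v : List α) : (res x v).length ≤ x.length := by
  simpa [res] using length_resAux_le x.reverse v.reverse

/-- `x / v` only removes a suffix of `x`, so if it is longer than `s` it keeps `s` intact. -/
theorem res_append_of_length_lt {s t v : List α} (h : s.length < (res (s ++ t) v).length) :
    res (s ++ t) v = s ++ res t v := by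
  unfold res at h ⊢
  rw [reverse_append] at h ⊢
  rw [resAux_append_of_length_lt _ _ _ (by simpa using h), reverse_append, reverse_reverse]

end Residual

theorem pr_wpow_append_of_length_lt {α : Type*} [DecidableEq α] (n : ℕ) (σ : List (Act α))
    (p z : List α)
    (h : n * (p ++ rea σ).length + (rea σ).length < (pr σ (wpow (p ++ rea σ) n ++ z)).length) :
    pr σ (wpow (p ++ rea σ) n ++ z) = wpow (rea σ ++ p) n ++ pr σ z := by
  induction σ generalizing p with
  | nil => simp [pr, rea]
  | cons θ σ ih =>
    cases θ with
    | write v =>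
      simp only [pr, rea] at h ⊢
      have hσ := ih p (h.trans_le (length_res_le _ _))
      rw [hσ] at h ⊢
      apply res_append_of_length_lt
      rw [length_wpow, length_append, Nat.add_comm]
      simp only [length_append] at h
      omega
    | read w =>
      simp only [pr, rea] at h ⊢
      rw [← append_assoc p] at h ⊢
      have hσ := ih (p ++ w) (by simp only [length_append] at h ⊢; omega)
      rw [hσ, ← append_assoc w, ← append_assoc (rea σ) p w, append_wpow_append_comm]
      simp only [append_assoc]

theorem pr_pump_down_general {α : Type*} [DecidableEq α]
    (σ : List (Act α)) (x : List α) (n : ℕ)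
    (hy : (n + 1) * (rea σ).length < (pr σ (wpow (rea σ) n ++ x)).length) :
    pr σ (wpow (rea σ) n ++ x) = wpow (rea σ) n ++ pr σ x := by
  simpa using pr_wpow_append_of_length_lt n σ [] x (by simpa [Nat.succ_mul] using hy)

/-- if `x` is a fractional power of `u = rea(σ)`, `y = pr[σ](uⁿ·x)` and
`|y| > (n+1)·|u|`, then `y = uⁿ·pr[σ](x)`. -/
theorem pr_pump_down {α : Type*} [DecidableEq α]
    (σ : List (Act α)) (x : List α) (n : ℕ) (h : FracPow (rea σ) x)
    (hy : (n + 1) * (rea σ).length < (pr σ (wpow (rea σ) n ++ x)).length) :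
    pr σ (wpow (rea σ) n ++ x) = wpow (rea σ) n ++ pr σ x :=
  pr_pump_down_general σ x n hy
end
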